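/- For x ≥ 2 define log* x to be the unique integer m ≥ 1 with 2↑↑m ≤ x < 2↑↑(m+1). Then for all n ≥ 2, H(n) ≤ log* n, where H is the super-factorization tree height. -/

import Mathlib

/-- Tetration base 2: `tet 0 = 1`, `tet (m+1) = 2 ^ tet m`. -/
def tet : ℕ → ℕ
  | 0 => 1
  | m + 1 => 2 ^ tet m

/-- Height of the super-factorization tree of `n`:
`H 1 = 0` and `H n = 1 + max_{p^α ∥ n} H α` for `n > 1`. -/
def H : ℕ → ℕ
  | n =>
    if h : n ≤ 1 then 0
    else 1 + (n.primeFactors.attach.sup fun p => H (n.factorization p.1))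
decreasing_by
  exact Nat.factorization_lt _ (by omega)

/-- `logStar x` is the largest `m` with `tet m ≤ x` (for `x ≥ 2` this is the unique `m ≥ 1`
with `tet m ≤ x < tet (m+1)`). -/
def logStar (x : ℕ) : ℕ := Nat.findGreatest (fun m => tet m ≤ x) x

/-! Every exponent `α` in `n = ∏ p ^ α` satisfies `2 ^ α ≤ p ^ α ≤ n`, so by induction along the
deepest branch of the super-factorization tree, `tet (H n) = 2 ^ tet (H α) ≤ 2 ^ α ≤ n`. -/

lemma lt_tet_self (m : ℕ) : m < tet m := by
  induction m with
  | zero => exact Nat.one_pos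
  | succ k ih => exact lt_of_le_of_lt ih Nat.lt_two_pow_self

lemma tet_succ (m : ℕ) : tet (m + 1) = 2 ^ tet m := rfl

lemma le_logStar_of_tet_le {m x : ℕ} (h : tet m ≤ x) : m ≤ logStar x :=
  Nat.le_findGreatest ((lt_tet_self m).le.trans h) h

lemma H_of_le_one {n : ℕ} (hn : n ≤ 1) : H n = 0 := by
  rw [H, dif_pos hn]

lemma H_of_one_lt {n : ℕ} (hn : 1 < n) :
    H n = (n.primeFactors.sup fun p => H (n.factorization p)) + 1 := by
  rw [H, dif_neg hn.not_ge, Nat.add_comm,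
    Finset.sup_attach n.primeFactors fun p => H (n.factorization p)]

lemma exists_mem_primeFactors_H_eq {n : ℕ} (hn : 1 < n) :
    ∃ p ∈ n.primeFactors, H n = H (n.factorization p) + 1 := by
  obtain ⟨p, hp, hsup⟩ := Finset.exists_mem_eq_sup _ (Nat.nonempty_primeFactors.mpr hn)
    fun p => H (n.factorization p)
  exact ⟨p, hp, by rw [H_of_one_lt hn, hsup]⟩

lemma Nat.two_pow_factorization_le {n : ℕ} (p : ℕ) (hn : n ≠ 0) : 2 ^ n.factorization p ≤ n := by
  by_cases hp : p.Prime
  · exact (Nat.pow_le_pow_left hp.two_le _).trans (Nat.ordProj_le p hn)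
  · rw [Nat.factorization_eq_zero_of_not_prime n hp, pow_zero]
    exact Nat.one_le_iff_ne_zero.mpr hn

theorem tet_H_le {n : ℕ} (hn : n ≠ 0) : tet (H n) ≤ n := by
  induction n using Nat.strong_induction_on with
  | _ n ih =>
    rcases (Nat.one_le_iff_ne_zero.mpr hn).eq_or_lt with rfl | hn1
    · rw [H_of_le_one le_rfl]; rfl
    obtain ⟨p, hp, hH⟩ := exists_mem_primeFactors_H_eq hn1
    have hα : n.factorization p ≠ 0 := by rwa [← Finsupp.mem_support_iff, Nat.support_factorization]
    calc tet (H n) = 2 ^ tet (H (n.factorization p)) := by rw [hH, tet_succ]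
      _ ≤ 2 ^ n.factorization p :=
        Nat.pow_le_pow_right two_pos (ih _ (Nat.factorization_lt p hn) hα)
      _ ≤ n := Nat.two_pow_factorization_le p hn

theorem stmt16 (n : ℕ) (hn : 2 ≤ n) : H n ≤ logStar n :=
  le_logStar_of_tet_le (tet_H_le (by omega))
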